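/- There exists a 2-colouring of the edges of the complete symmetric digraph on the positive integers such that every monochromatic directed path has upper density 0. -/

import Mathlib

open scoped Classical

/-- Upper density of a set of positive integers. -/
noncomputable def upperDensity (A : Set ℕ) : ℝ :=
  Filter.limsup
    (fun n : ℕ => (((Finset.Icc 1 n).filter (fun m => m ∈ A)).card : ℝ) / n)
    Filter.atTop

/-!
Colour the edge `(m, n)` by whether `⌊√m⌋ < ⌊√n⌋`. Along a path of the first colour `⌊√·⌋`
strictly increases, so such a path meets `{1, …, n}` in at most `⌊√n⌋ + 1` vertices. Along a
path of the second colour `⌊√·⌋` never increases, so its vertices stay below a fixed bound and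
the path is finite. A finite path has density zero anyway.
-/

open Filter Topology

lemma upperDensity_eq_zero_of_card_le {A : Set ℕ} {b : ℕ → ℝ}
    (hb : Tendsto (fun n => b n / n) atTop (𝓝 0))
    (hA : ∀ n, (((Finset.Icc 1 n).filter (· ∈ A)).card : ℝ) ≤ b n) :
    upperDensity A = 0 :=
  Tendsto.limsup_eq <| squeeze_zero (fun _ => by positivity)
    (fun n => div_le_div_of_nonneg_right (hA n) n.cast_nonneg) hb

lemma upperDensity_eq_zero_of_finite {A : Set ℕ} (hA : A.Finite) : upperDensity A = 0 :=
  upperDensity_eq_zero_of_card_le (tendsto_const_div_atTop_nhds_zero_nat (hA.toFinset.card : ℝ))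
    fun n => by
      have hsub : (Finset.Icc 1 n).filter (· ∈ A) ⊆ hA.toFinset := fun x hx =>
        hA.mem_toFinset.mpr (Finset.mem_filter.mp hx).2
      exact_mod_cast Finset.card_le_card hsub

lemma card_filter_mem_range_le {φ v : ℕ → ℕ} (hφ : Monotone φ) (hv : StrictMono (φ ∘ v))
    (n : ℕ) : ((Finset.Icc 1 n).filter (· ∈ Set.range v)).card ≤ φ n + 1 := by
  calc _ ≤ (Finset.range (φ n + 1)).card := by
        refine Finset.card_le_card_of_injOn φ (fun x hx => ?_) (fun x hx y hy hxy => ?_)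
        · simp only [Finset.coe_filter, Finset.mem_Icc] at hx
          simpa [Nat.lt_succ_iff] using hφ hx.1.2
        · simp only [Finset.coe_filter, Finset.mem_Icc] at hx hy
          obtain ⟨-, i, rfl⟩ := hx
          obtain ⟨-, j, rfl⟩ := hy
          rw [hv.injective hxy]
    _ = φ n + 1 := Finset.card_range _

lemma not_injective_of_antitone_comp {φ v : ℕ → ℕ} (hφ : Tendsto φ atTop atTop)
    (hv : Antitone (φ ∘ v)) : ¬ Function.Injective v := by
  intro hinj
  obtain ⟨N, hN⟩ := eventually_atTop.mp (hφ.eventually_gt_atTop (φ (v 0)))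
  have hbounded : Set.range v ⊆ Set.Iio N := by
    rintro _ ⟨i, rfl⟩
    by_contra hi
    exact (hN (v i) (not_lt.mp hi)).not_ge (hv (Nat.zero_le i))
  exact Set.infinite_range_of_injective hinj ((Set.finite_Iio N).subset hbounded)

lemma tendsto_nat_sqrt_atTop : Tendsto Nat.sqrt atTop atTop :=
  Monotone.tendsto_atTop_atTop (fun _ _ => Nat.sqrt_le_sqrt) fun b => ⟨b ^ 2, (Nat.sqrt_eq' b).ge⟩

lemma tendsto_nat_sqrt_add_one_div_atTop :
    Tendsto (fun n : ℕ => ((Nat.sqrt n : ℝ) + 1) / n) atTop (𝓝 0) := by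
  refine squeeze_zero' (Eventually.of_forall fun _ => by positivity) ?_
    ((tendsto_const_div_atTop_nhds_zero_nat 2).comp tendsto_nat_sqrt_atTop)
  filter_upwards [eventually_ge_atTop 1] with n hn
  have hs : 1 ≤ Nat.sqrt n := Nat.sqrt_pos.mpr hn
  have hsq : (Nat.sqrt n : ℝ) * Nat.sqrt n ≤ n := by exact_mod_cast Nat.sqrt_le n
  have hs' : (1 : ℝ) ≤ Nat.sqrt n := by exact_mod_cast hs
  rw [Function.comp_apply, div_le_div_iff₀ (by positivity) (by positivity)]
  nlinarith

lemma upperDensity_range_eq_zero_of_strictMono_sqrt {v : ℕ → ℕ}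
    (hv : StrictMono (Nat.sqrt ∘ v)) : upperDensity (Set.range v) = 0 :=
  upperDensity_eq_zero_of_card_le tendsto_nat_sqrt_add_one_div_atTop fun n => by
    exact_mod_cast card_filter_mem_range_le (fun _ _ => Nat.sqrt_le_sqrt) hv n

def sqrtColouring (m n : ℕ) : Fin 2 :=
  if Nat.sqrt m < Nat.sqrt n then 0 else 1

lemma sqrtColouring_eq_zero_iff {m n : ℕ} : sqrtColouring m n = 0 ↔ Nat.sqrt m < Nat.sqrt n := by
  unfold sqrtColouring
  split_ifs <;> simp_all

lemma sqrtColouring_eq_one_iff {m n : ℕ} : sqrtColouring m n = 1 ↔ Nat.sqrt n ≤ Nat.sqrt m := by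
  unfold sqrtColouring
  split_ifs <;> simp_all

theorem stmt0 :
    ∃ c : ℕ → ℕ → Fin 2,
      (∀ v : ℕ → ℕ, Function.Injective v →
        (∃ col : Fin 2, ∀ i : ℕ, c (v i) (v (i + 1)) = col) →
        upperDensity (Set.range v) = 0) ∧
      (∀ (m : ℕ) (v : Fin (m + 1) → ℕ), Function.Injective v →
        (∃ col : Fin 2, ∀ i : Fin m, c (v i.castSucc) (v i.succ) = col) →
        upperDensity (Set.range v) = 0) := by
  refine ⟨sqrtColouring, ?_, fun _ v _ _ => upperDensity_eq_zero_of_finite (Set.finite_range v)⟩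
  rintro v hinj ⟨col, hcol⟩
  obtain rfl | rfl := Fin.exists_fin_two.mp ⟨col, rfl⟩
  · exact upperDensity_range_eq_zero_of_strictMono_sqrt
      (strictMono_nat_of_lt_succ fun i => sqrtColouring_eq_zero_iff.mp (hcol i))
  · exact absurd hinj (not_injective_of_antitone_comp tendsto_nat_sqrt_atTop
      (antitone_nat_of_succ_le fun i => sqrtColouring_eq_one_iff.mp (hcol i)))
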